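/- For ν ≥ 1, the two-dimensional weighted sequence space X = {a = (a_k)_{k∈ℕ²} : ‖a‖ = ∑_{k∈ℕ²} m_k |a_k| ν^{max(|k₁|,|k₂|)} < ∞}, where m_k is the multiplicity (1 if k₁=k₂=0, 2 if exactly one of k₁,k₂ is 0, and 4 if both positive), is a Banach algebra under the symmetrized 2D discrete convolution: ‖a ∗ b‖ ≤ ‖a‖‖b‖. -/
import Mathlib


/-- The multiplicity `m_k`: 1 if both indices vanish, 2 if exactly one vanishes, 4 otherwise. -/
def mult (k : ℕ × ℕ) : ℝ :=
  if k.1 = 0 ∧ k.2 = 0 then 1 else if k.1 = 0 ∨ k.2 = 0 then 2 else 4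

/-- Membership in the 2D weighted space: the weighted series converges absolutely. -/
def memX2 (ν : ℝ) (a : ℕ × ℕ → ℝ) : Prop :=
  Summable (fun k : ℕ × ℕ => mult k * |a k| * ν ^ max k.1 k.2)

/-- The 2D weighted norm `‖a‖ = ∑_{k∈ℕ²} m_k |a_k| ν^{max(k₁,k₂)}`. -/
noncomputable def wnorm2 (ν : ℝ) (a : ℕ × ℕ → ℝ) : ℝ :=
  ∑' k : ℕ × ℕ, mult k * |a k| * ν ^ max k.1 k.2

/-- Symmetrized 2D discrete convolution: sequences are extended to `ℤ²` by
`a_{(k₁,k₂)} = a_{(|k₁|,|k₂|)}` and `(a∗b)_k = ∑_{k'∈ℤ²} a_{k'} b_{k−k'}`. -/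
noncomputable def conv2 (a b : ℕ × ℕ → ℝ) (k : ℕ × ℕ) : ℝ :=
  ∑' j : ℤ × ℤ, a (j.1.natAbs, j.2.natAbs) *
    b (((k.1 : ℤ) - j.1).natAbs, ((k.2 : ℤ) - j.2).natAbs)

open scoped ENNReal

namespace TwoDAux

/-- 1D fibering: summing an even extension over `ℤ` counts `0` once and each
positive integer twice. -/
lemma tsum_int_natAbs (H : ℕ → ℝ≥0∞) :
    ∑' z : ℤ, H z.natAbs = ∑' n : ℕ, (if n = 0 then 1 else 2) * H n := by
  have hL : ∑' z : ℤ, H z.natAbs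
      = (∑' n : ℕ, H n) + ∑' n : ℕ, H (n + 1) := by
    rw [tsum_of_nat_of_neg_add_one ENNReal.summable ENNReal.summable]
    have h1 : ∀ n : ℕ, ((-((n : ℤ) + 1)).natAbs) = n + 1 := fun n => by omega
    simp only [Int.natAbs_natCast, h1]
  have hR : ∑' n : ℕ, (if n = 0 then 1 else 2) * H n
      = H 0 + 2 * ∑' n : ℕ, H (n + 1) := by
    rw [tsum_eq_zero_add' ENNReal.summable]
    simp only [eq_self_iff_true, if_true, one_mul, Nat.add_eq_zero, Nat.succ_ne_zero,
      and_false, if_false, one_ne_zero]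
    rw [ENNReal.tsum_mul_left]
  have hL2 : (∑' n : ℕ, H n) = H 0 + ∑' n : ℕ, H (n + 1) :=
    tsum_eq_zero_add' ENNReal.summable
  rw [hL, hR, hL2, two_mul, add_assoc]

lemma ofReal_mult (k : ℕ × ℕ) :
    ENNReal.ofReal (mult k)
      = (if k.1 = 0 then 1 else 2) * (if k.2 = 0 then 1 else 2) := by
  unfold mult
  rcases eq_or_ne k.1 0 with h1 | h1 <;> rcases eq_or_ne k.2 0 with h2 | h2 <;>
    simp only [h1, h2, if_pos, if_neg, and_true, true_and, and_false, false_and,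
      or_self, or_true, true_or, if_true, if_false, eq_self_iff_true, not_false_iff] <;>
    first
      | norm_num
      | (rw [show (4 : ℝ) = (2 : ℝ) * 2 by norm_num,
          ENNReal.ofReal_mul (by norm_num)]; norm_num)

/-- 2D fibering over `ℤ²`. -/
lemma tsum_int2_natAbs (H : ℕ × ℕ → ℝ≥0∞) :
    ∑' j : ℤ × ℤ, H (j.1.natAbs, j.2.natAbs)
      = ∑' k : ℕ × ℕ, ENNReal.ofReal (mult k) * H k := by
  rw [ENNReal.tsum_prod']
  calc ∑' (z1 : ℤ) (z2 : ℤ), H (((z1, z2) : ℤ × ℤ).1.natAbs, ((z1, z2) : ℤ × ℤ).2.natAbs)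
      = ∑' z1 : ℤ, ∑' n2 : ℕ, (if n2 = 0 then 1 else 2) * H (z1.natAbs, n2) :=
        tsum_congr fun z1 => tsum_int_natAbs fun n2 => H (z1.natAbs, n2)
    _ = ∑' n1 : ℕ, (if n1 = 0 then 1 else 2) *
          ∑' n2 : ℕ, (if n2 = 0 then 1 else 2) * H (n1, n2) :=
        tsum_int_natAbs fun n1 => ∑' n2 : ℕ, (if n2 = 0 then 1 else 2) * H (n1, n2)
    _ = ∑' n1 : ℕ, ∑' n2 : ℕ, ENNReal.ofReal (mult (n1, n2)) * H (n1, n2) := by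
        refine tsum_congr fun n1 => ?_
        rw [← ENNReal.tsum_mul_left]
        refine tsum_congr fun n2 => ?_
        rw [ofReal_mult (n1, n2), mul_assoc]
    _ = ∑' k : ℕ × ℕ, ENNReal.ofReal (mult k) * H k :=
        (ENNReal.tsum_prod' (f := fun k : ℕ × ℕ => ENNReal.ofReal (mult k) * H k)).symm

end TwoDAux

/-- For `ν ≥ 1` the 2D weighted space is a Banach algebra under the symmetrized 2D
discrete convolution: `‖a ∗ b‖ ≤ ‖a‖ ‖b‖`. -/
theorem twoD_banach_algebra (ν : ℝ) (hν : 1 ≤ ν) (a b : ℕ × ℕ → ℝ)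
    (ha : memX2 ν a) (hb : memX2 ν b) :
    memX2 ν (conv2 a b) ∧ wnorm2 ν (conv2 a b) ≤ wnorm2 ν a * wnorm2 ν b := by
  have hν0 : (0 : ℝ) ≤ ν := le_trans zero_le_one hν
  set w : ℤ × ℤ → ℝ := fun j => ν ^ max j.1.natAbs j.2.natAbs with hw_def
  have hw1 : ∀ j, (1 : ℝ) ≤ w j := fun j => one_le_pow₀ hν
  have hw0 : ∀ j, (0 : ℝ) ≤ w j := fun j => le_trans zero_le_one (hw1 j)
  set ea : ℤ × ℤ → ℝ := fun j => a (j.1.natAbs, j.2.natAbs) with hea_def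
  set eb : ℤ × ℤ → ℝ := fun j => b (j.1.natAbs, j.2.natAbs) with heb_def
  -- submultiplicativity of the weight
  have hsub : ∀ j j' : ℤ × ℤ, w j ≤ w j' * w (j - j') := by
    intro j j'
    have hmax : max j.1.natAbs j.2.natAbs ≤
        max j'.1.natAbs j'.2.natAbs + max (j - j').1.natAbs (j - j').2.natAbs := by
      have h1 : j.1.natAbs ≤ j'.1.natAbs + (j.1 - j'.1).natAbs := by
        have := Int.natAbs_add_le j'.1 (j.1 - j'.1); simpa using this
      have h2 : j.2.natAbs ≤ j'.2.natAbs + (j.2 - j'.2).natAbs := by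
        have := Int.natAbs_add_le j'.2 (j.2 - j'.2); simpa using this
      rcases max_cases j.1.natAbs j.2.natAbs with ⟨hm, _⟩ | ⟨hm, _⟩ <;> rw [hm]
      · exact le_trans h1 (add_le_add (le_max_left _ _) (le_max_left _ _))
      · exact le_trans h2 (add_le_add (le_max_right _ _) (le_max_right _ _))
    calc w j = ν ^ max j.1.natAbs j.2.natAbs := rfl
      _ ≤ ν ^ (max j'.1.natAbs j'.2.natAbs + max (j - j').1.natAbs (j - j').2.natAbs) :=
        pow_le_pow_right₀ hν hmax
      _ = w j' * w (j - j') := by rw [pow_add]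
  set A : ℤ × ℤ → ℝ≥0∞ := fun j => ENNReal.ofReal (|ea j| * w j) with hA_def
  set B : ℤ × ℤ → ℝ≥0∞ := fun j => ENNReal.ofReal (|eb j| * w j) with hB_def
  have hmultpos : ∀ k : ℕ × ℕ, (0 : ℝ) ≤ mult k := by
    intro k; unfold mult; split_ifs <;> norm_num
  have hterm_nonneg : ∀ c : ℕ × ℕ → ℝ, ∀ k : ℕ × ℕ,
      (0 : ℝ) ≤ mult k * |c k| * ν ^ max k.1 k.2 := fun c k =>
    mul_nonneg (mul_nonneg (hmultpos k) (abs_nonneg _)) (pow_nonneg hν0 _)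
  -- ℤ²-sum of an extension equals the ℕ²-weighted sum
  have key : ∀ c : ℕ × ℕ → ℝ,
      (∑' j : ℤ × ℤ, ENNReal.ofReal (|c (j.1.natAbs, j.2.natAbs)| * w j))
        = ∑' k : ℕ × ℕ, ENNReal.ofReal (mult k * |c k| * ν ^ max k.1 k.2) := by
    intro c
    have h := TwoDAux.tsum_int2_natAbs
      (fun k : ℕ × ℕ => ENNReal.ofReal (|c k| * ν ^ max k.1 k.2))
    rw [show (fun j : ℤ × ℤ => ENNReal.ofReal (|c (j.1.natAbs, j.2.natAbs)| * w j))
        = fun j : ℤ × ℤ =>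
          (fun k : ℕ × ℕ => ENNReal.ofReal (|c k| * ν ^ max k.1 k.2))
            (j.1.natAbs, j.2.natAbs) from rfl, h]
    refine tsum_congr fun k => ?_
    rw [← ENNReal.ofReal_mul (hmultpos k), ← mul_assoc]
  have hSA : (∑' j : ℤ × ℤ, A j) = ENNReal.ofReal (wnorm2 ν a) := by
    rw [hA_def]
    rw [show (fun j : ℤ × ℤ => ENNReal.ofReal (|ea j| * w j))
      = fun j : ℤ × ℤ => ENNReal.ofReal (|a (j.1.natAbs, j.2.natAbs)| * w j) from rfl]
    rw [key a, ← ENNReal.ofReal_tsum_of_nonneg (hterm_nonneg a) ha]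
    rfl
  have hSB : (∑' j : ℤ × ℤ, B j) = ENNReal.ofReal (wnorm2 ν b) := by
    rw [hB_def]
    rw [show (fun j : ℤ × ℤ => ENNReal.ofReal (|eb j| * w j))
      = fun j : ℤ × ℤ => ENNReal.ofReal (|b (j.1.natAbs, j.2.natAbs)| * w j) from rfl]
    rw [key b, ← ENNReal.ofReal_tsum_of_nonneg (hterm_nonneg b) hb]
    rfl
  -- real summability of the extensions
  have hsumA : Summable fun j : ℤ × ℤ => |ea j| * w j := by
    have h := ENNReal.summable_toReal (f := A) (by rw [hSA]; exact ENNReal.ofReal_ne_top)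
    refine h.congr fun j => ?_
    exact ENNReal.toReal_ofReal (mul_nonneg (abs_nonneg _) (hw0 j))
  have hsumB : Summable fun j : ℤ × ℤ => |eb j| * w j := by
    have h := ENNReal.summable_toReal (f := B) (by rw [hSB]; exact ENNReal.ofReal_ne_top)
    refine h.congr fun j => ?_
    exact ENNReal.toReal_ofReal (mul_nonneg (abs_nonneg _) (hw0 j))
  have habsA : Summable fun j : ℤ × ℤ => |ea j| :=
    hsumA.of_nonneg_of_le (fun j => abs_nonneg _)
      (fun j => le_mul_of_one_le_right (abs_nonneg _) (hw1 j))
  have habsB : Summable fun j : ℤ × ℤ => |eb j| :=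
    hsumB.of_nonneg_of_le (fun j => abs_nonneg _)
      (fun j => le_mul_of_one_le_right (abs_nonneg _) (hw1 j))
  set Cb : ℝ := ∑' j : ℤ × ℤ, |eb j| with hCb_def
  have hCb : ∀ j, |eb j| ≤ Cb := fun j => Summable.le_tsum habsB j fun _ _ => abs_nonneg _
  have hconv_abs : ∀ j : ℤ × ℤ, Summable fun j' : ℤ × ℤ => |ea j'| * |eb (j - j')| := by
    intro j
    refine (habsA.mul_right Cb).of_nonneg_of_le
      (fun j' => mul_nonneg (abs_nonneg _) (abs_nonneg _)) fun j' => ?_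
    exact mul_le_mul_of_nonneg_left (hCb _) (abs_nonneg _)
  have hconv_sum : ∀ j : ℤ × ℤ, Summable fun j' : ℤ × ℤ => ea j' * eb (j - j') := by
    intro j
    refine Summable.of_norm ?_
    refine (hconv_abs j).congr fun j' => ?_
    rw [Real.norm_eq_abs, abs_mul]
  set E : ℤ × ℤ → ℝ := fun j => ∑' j' : ℤ × ℤ, ea j' * eb (j - j') with hE_def
  -- symmetry of E in each coordinate
  have hEneg1 : ∀ z1 z2 : ℤ, E (-z1, z2) = E (z1, z2) := by
    intro z1 z2
    have h := ((Equiv.neg ℤ).prodCongr (Equiv.refl ℤ)).tsum_eq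
      (fun j' : ℤ × ℤ => ea j' * eb ((-z1, z2) - j'))
    rw [hE_def]
    dsimp only
    rw [← h]
    refine tsum_congr fun j' => ?_
    show ea (-j'.1, j'.2) * eb ((-z1, z2) - (-j'.1, j'.2)) = ea j' * eb ((z1, z2) - j')
    have e1 : ea (-j'.1, j'.2) = ea j' := by
      rw [hea_def]; dsimp only; rw [Int.natAbs_neg]
    have e2 : eb ((-z1, z2) - (-j'.1, j'.2)) = eb ((z1, z2) - j') := by
      rw [heb_def]
      show b ((-z1 - -j'.1).natAbs, (z2 - j'.2).natAbs)
        = b ((z1 - j'.1).natAbs, (z2 - j'.2).natAbs)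
      rw [show -z1 - -j'.1 = -(z1 - j'.1) by ring, Int.natAbs_neg]
    rw [e1, e2]
  have hEneg2 : ∀ z1 z2 : ℤ, E (z1, -z2) = E (z1, z2) := by
    intro z1 z2
    have h := ((Equiv.refl ℤ).prodCongr (Equiv.neg ℤ)).tsum_eq
      (fun j' : ℤ × ℤ => ea j' * eb ((z1, -z2) - j'))
    rw [hE_def]
    dsimp only
    rw [← h]
    refine tsum_congr fun j' => ?_
    show ea (j'.1, -j'.2) * eb ((z1, -z2) - (j'.1, -j'.2)) = ea j' * eb ((z1, z2) - j')
    have e1 : ea (j'.1, -j'.2) = ea j' := by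
      rw [hea_def]; dsimp only; rw [Int.natAbs_neg]
    have e2 : eb ((z1, -z2) - (j'.1, -j'.2)) = eb ((z1, z2) - j') := by
      rw [heb_def]
      show b ((z1 - j'.1).natAbs, (-z2 - -j'.2).natAbs)
        = b ((z1 - j'.1).natAbs, (z2 - j'.2).natAbs)
      rw [show -z2 - -j'.2 = -(z2 - j'.2) by ring, Int.natAbs_neg]
    rw [e1, e2]
  -- the extension of conv2 equals E
  have hconvE : ∀ j : ℤ × ℤ, conv2 a b (j.1.natAbs, j.2.natAbs) = E j := by
    intro j
    have base : conv2 a b (j.1.natAbs, j.2.natAbs)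
        = E ((j.1.natAbs : ℤ), (j.2.natAbs : ℤ)) := rfl
    have s1 : ((j.1.natAbs : ℤ)) = j.1 ∨ ((j.1.natAbs : ℤ)) = -j.1 := by
      omega
    have s2 : ((j.2.natAbs : ℤ)) = j.2 ∨ ((j.2.natAbs : ℤ)) = -j.2 := by
      omega
    rw [base]
    rcases s1 with h1 | h1 <;> rcases s2 with h2 | h2 <;> rw [h1, h2]
    · rw [hEneg2]
    · rw [hEneg1]
    · rw [hEneg1, hEneg2]
  -- pointwise bound on |E|
  have hEbound : ∀ j : ℤ × ℤ, |E j| ≤ ∑' j' : ℤ × ℤ, |ea j'| * |eb (j - j')| := by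
    intro j
    have hs : Summable fun j' : ℤ × ℤ => ‖ea j' * eb (j - j')‖ :=
      (hconv_abs j).congr fun j' => by rw [Real.norm_eq_abs, abs_mul]
    have h := norm_tsum_le_tsum_norm hs
    rw [Real.norm_eq_abs] at h
    refine le_trans h (le_of_eq (tsum_congr fun j' => ?_))
    rw [Real.norm_eq_abs, abs_mul]
  -- main ENNReal estimate
  have main : (∑' j : ℤ × ℤ, ENNReal.ofReal (|E j| * w j))
      ≤ (∑' j : ℤ × ℤ, A j) * ∑' j : ℤ × ℤ, B j := by
    have step1 : (∑' j : ℤ × ℤ, ENNReal.ofReal (|E j| * w j))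
        ≤ ∑' j : ℤ × ℤ, ∑' j' : ℤ × ℤ, A j' * B (j - j') := by
      refine ENNReal.tsum_le_tsum fun j => ?_
      calc ENNReal.ofReal (|E j| * w j)
          ≤ ENNReal.ofReal ((∑' j' : ℤ × ℤ, |ea j'| * |eb (j - j')|) * w j) :=
            ENNReal.ofReal_le_ofReal
              (mul_le_mul_of_nonneg_right (hEbound j) (hw0 j))
        _ = (∑' j' : ℤ × ℤ, ENNReal.ofReal (|ea j'| * |eb (j - j')|))
              * ENNReal.ofReal (w j) := by
            rw [ENNReal.ofReal_mul
              (tsum_nonneg fun j' => mul_nonneg (abs_nonneg _) (abs_nonneg _)),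
              ENNReal.ofReal_tsum_of_nonneg
                (fun j' => mul_nonneg (abs_nonneg _) (abs_nonneg _)) (hconv_abs j)]
        _ = ∑' j' : ℤ × ℤ, ENNReal.ofReal (|ea j'| * |eb (j - j')|)
              * ENNReal.ofReal (w j) := ENNReal.tsum_mul_right.symm
        _ ≤ ∑' j' : ℤ × ℤ, A j' * B (j - j') := by
            refine ENNReal.tsum_le_tsum fun j' => ?_
            rw [hA_def, hB_def]
            dsimp only
            rw [← ENNReal.ofReal_mul (mul_nonneg (abs_nonneg _) (abs_nonneg _)),
              ← ENNReal.ofReal_mul (mul_nonneg (abs_nonneg _) (hw0 _))]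
            refine ENNReal.ofReal_le_ofReal ?_
            calc |ea j'| * |eb (j - j')| * w j
                ≤ |ea j'| * |eb (j - j')| * (w j' * w (j - j')) :=
                  mul_le_mul_of_nonneg_left (hsub j j')
                    (mul_nonneg (abs_nonneg _) (abs_nonneg _))
              _ = |ea j'| * w j' * (|eb (j - j')| * w (j - j')) := by ring
    refine le_trans step1 (le_of_eq ?_)
    calc (∑' j : ℤ × ℤ, ∑' j' : ℤ × ℤ, A j' * B (j - j'))
        = ∑' j' : ℤ × ℤ, ∑' j : ℤ × ℤ, A j' * B (j - j') := ENNReal.tsum_comm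
      _ = ∑' j' : ℤ × ℤ, A j' * ∑' j : ℤ × ℤ, B (j - j') :=
          tsum_congr fun j' => ENNReal.tsum_mul_left
      _ = ∑' j' : ℤ × ℤ, A j' * ∑' i : ℤ × ℤ, B i := by
          refine tsum_congr fun j' => ?_
          congr 1
          have h := (Equiv.subRight j').tsum_eq B
          simpa [Equiv.subRight] using h
      _ = (∑' j' : ℤ × ℤ, A j') * ∑' i : ℤ × ℤ, B i := ENNReal.tsum_mul_right
  -- transfer back to ℕ²
  have hSC : (∑' j : ℤ × ℤ, ENNReal.ofReal (|E j| * w j))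
      = ∑' k : ℕ × ℕ, ENNReal.ofReal (mult k * |conv2 a b k| * ν ^ max k.1 k.2) := by
    rw [← key (conv2 a b)]
    exact tsum_congr fun j => by rw [hconvE j]
  have hfin : (∑' k : ℕ × ℕ,
      ENNReal.ofReal (mult k * |conv2 a b k| * ν ^ max k.1 k.2)) ≠ ⊤ := by
    refine ne_top_of_le_ne_top ?_ (hSC ▸ main)
    rw [hSA, hSB]
    exact ENNReal.mul_ne_top ENNReal.ofReal_ne_top ENNReal.ofReal_ne_top
  have hmem : memX2 ν (conv2 a b) := by
    have h := ENNReal.summable_toReal hfin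
    exact h.congr fun k => ENNReal.toReal_ofReal (hterm_nonneg (conv2 a b) k)
  refine ⟨hmem, ?_⟩
  have hwa0 : 0 ≤ wnorm2 ν a := tsum_nonneg (hterm_nonneg a)
  have hwb0 : 0 ≤ wnorm2 ν b := tsum_nonneg (hterm_nonneg b)
  have hofreal : ENNReal.ofReal (wnorm2 ν (conv2 a b))
      ≤ ENNReal.ofReal (wnorm2 ν a * wnorm2 ν b) := by
    rw [show wnorm2 ν (conv2 a b)
      = ∑' k : ℕ × ℕ, mult k * |conv2 a b k| * ν ^ max k.1 k.2 from rfl]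
    rw [ENNReal.ofReal_tsum_of_nonneg (hterm_nonneg (conv2 a b)) hmem, ← hSC,
      ENNReal.ofReal_mul hwa0, ← hSA, ← hSB]
    exact main
  exact (ENNReal.ofReal_le_ofReal_iff (mul_nonneg hwa0 hwb0)).mp hofreal
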